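/- Let R be a complete discrete valuation ring with fraction field K. Consider A = R[[S]] ⊗_R K. There is no ring topology on A for which the subring R[[S]] is open. Concretely: there is a unique group topology on A making R[[S]] an open subgroup with its (π,S)-adic topology, but multiplication by π^{-1} is not continuous for it, because for no n ∈ ℕ does π^{-1} S^n belong to R[[S]]. -/

import Mathlib

/-!
Common definitions for formalizing results of C. Kappen, "Uniformly rigid spaces".

`R` is a (complete) discrete valuation ring with uniformizer `π` and fraction field `K`.
An `R`-algebra of formally finite (ff) type is a (topological) quotient of a mixed formal
power series ring `R[[S₁,…,S_m]]⟨T₁,…,T_n⟩`.  We realize the mixed power series ring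
concretely as the subalgebra of `MvPowerSeries (Fin n) (MvPowerSeries (Fin m) R)`
consisting of power series in the variables `T` whose coefficients tend to `0` for the
`(π, S₁, …, S_m)`-adic topology of `R[[S₁,…,S_m]]`.
-/

set_option synthInstance.maxHeartbeats 800000
set_option maxHeartbeats 1600000

open scoped TensorProduct Pointwise

namespace URig

/-- Power series with only finitely many nonzero coefficients are restricted. -/
theorem support_finite_restricted {A : Type*} [CommRing A] {I : Ideal A} {n : ℕ}
    {f : MvPowerSeries (Fin n) A}
    (h : {d : Fin n →₀ ℕ | MvPowerSeries.coeff (R := A) d f ≠ 0}.Finite) (k : ℕ) :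
    {d : Fin n →₀ ℕ | MvPowerSeries.coeff (R := A) d f ∉ I ^ k}.Finite :=
  h.subset fun _ hd h0 => hd (by rw [h0]; exact Submodule.zero_mem _)

/-- The `A`-subalgebra of restricted power series in `n` variables over the adic ring
`(A, I)`: those multivariate power series whose coefficients tend to `0` in the `I`-adic
topology. -/
noncomputable def restrictedSubalgebra (A : Type*) [CommRing A] (I : Ideal A) (n : ℕ) :
    Subalgebra A (MvPowerSeries (Fin n) A) where
  carrier := {f | ∀ k : ℕ, {d : Fin n →₀ ℕ | MvPowerSeries.coeff (R := A) d f ∉ I ^ k}.Finite}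
  zero_mem' := support_finite_restricted
    (Set.finite_empty.subset fun d hd => (hd (map_zero _)).elim)
  one_mem' := support_finite_restricted <|
    (Set.finite_singleton (0 : Fin n →₀ ℕ)).subset fun d hd => by
      by_contra hne
      rw [Set.mem_singleton_iff] at hne
      exact hd (by classical simp [MvPowerSeries.coeff_one, hne])
  add_mem' := by
    intro f g hf hg k
    refine ((hf k).union (hg k)).subset fun d hd => ?_
    by_contra h
    simp only [Set.mem_union, Set.mem_setOf_eq, not_or, not_not] at h
    exact hd (by rw [map_add]; exact Ideal.add_mem _ h.1 h.2)
  mul_mem' := by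
    classical
    intro f g hf hg k
    refine ((hf k).add (hg k)).subset fun d hd => ?_
    by_contra hsum
    refine hd ?_
    rw [MvPowerSeries.coeff_mul]
    refine Ideal.sum_mem _ ?_
    rintro ⟨d1, d2⟩ hp
    rw [Finset.HasAntidiagonal.mem_antidiagonal] at hp
    by_cases h1 : MvPowerSeries.coeff (R := A) d1 f ∈ I ^ k
    · exact Ideal.mul_mem_right _ _ h1
    by_cases h2 : MvPowerSeries.coeff (R := A) d2 g ∈ I ^ k
    · exact Ideal.mul_mem_left _ _ h2
    exact absurd (hp ▸ Set.add_mem_add h1 h2) hsum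
  algebraMap_mem' := fun a => support_finite_restricted <|
    (Set.finite_singleton (0 : Fin n →₀ ℕ)).subset fun d hd => by
      by_contra hne
      rw [Set.mem_singleton_iff] at hne
      exact hd (by classical simp [MvPowerSeries.algebraMap_apply, MvPowerSeries.coeff_C, hne])

/-- The ideal of definition `(π, S₁, …, S_m)` of the formal power series ring
`R[[S₁,…,S_m]]`. -/
noncomputable def defIdeal (R : Type*) [CommRing R] (π : R) (m : ℕ) :
    Ideal (MvPowerSeries (Fin m) R) :=
  Ideal.span ({MvPowerSeries.C (σ := Fin m) (R := R) π} ∪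
    Set.range (MvPowerSeries.X : Fin m → MvPowerSeries (Fin m) R))

/-- The mixed formal power series ring `R[[S₁,…,S_m]]⟨T₁,…,T_n⟩`: restricted power series
in the variables `T` over `R[[S]]` with its `(π, S)`-adic topology. -/
noncomputable abbrev MixedSeries (R : Type*) [CommRing R] (π : R) (m n : ℕ) : Type _ :=
  ↥(restrictedSubalgebra (MvPowerSeries (Fin m) R) (defIdeal R π m) n)

/-- The variable `Sᵢ` as an element of `R[[S₁,…,S_m]]⟨T₁,…,T_n⟩`. -/
noncomputable def Sgen (R : Type*) [CommRing R] (π : R) (m n : ℕ) (i : Fin m) :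
    MixedSeries R π m n :=
  ⟨algebraMap (MvPowerSeries (Fin m) R) (MvPowerSeries (Fin n) (MvPowerSeries (Fin m) R))
      (MvPowerSeries.X i),
    Subalgebra.algebraMap_mem _ _⟩

/-- The variable `Tⱼ` as an element of `R[[S₁,…,S_m]]⟨T₁,…,T_n⟩`. -/
noncomputable def Tgen (R : Type*) [CommRing R] (π : R) (m n : ℕ) (j : Fin n) :
    MixedSeries R π m n :=
  ⟨MvPowerSeries.X j, support_finite_restricted <|
    (Set.finite_singleton (Finsupp.single j 1)).subset fun d hd => by
      by_contra hne
      rw [Set.mem_singleton_iff] at hne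
      exact hd (by classical simp [MvPowerSeries.coeff_X, hne])⟩

/-- An `R`-algebra is of formally finite (ff) type if it is a (topological) quotient of a
mixed formal power series ring `R[[S₁,…,S_m]]⟨T₁,…,T_n⟩`.  (Any ring surjection from the
mixed power series ring is automatically a topological quotient map, all ideals of the
noetherian adic source being closed.) -/
def IsFFType (R : Type*) [CommRing R] (π : R) (A : Type*) [CommRing A] [Algebra R A] :
    Prop :=
  ∃ (m n : ℕ) (f : MixedSeries R π m n →ₐ[R] A), Function.Surjective f

/-- An `R`-algebra is of topologically finite (tf) type if it is a quotient of a restricted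
power series ring `R⟨T₁,…,T_n⟩ = R[[∅]]⟨T₁,…,T_n⟩`. -/
def IsTFType (R : Type*) [CommRing R] (π : R) (A : Type*) [CommRing A] [Algebra R A] :
    Prop :=
  ∃ (n : ℕ) (f : MixedSeries R π 0 n →ₐ[R] A), Function.Surjective f

/-- An `R`-model of ff type of a `K`-algebra `A`: an `R`-subalgebra `A₀ ⊆ A` of ff type
such that the natural map `A₀ ⊗_R K → A` is an isomorphism, i.e. (as `A₀ ⊆ A` and `π` acts
invertibly on `A`) such that every element of `A` becomes an element of `A₀` after
multiplication by a suitable power of `π`. -/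
def IsFFModel (R : Type*) [CommRing R] (π : R) {A : Type*} [CommRing A] [Algebra R A]
    (A₀ : Subalgebra R A) : Prop :=
  IsFFType R π ↥A₀ ∧ ∀ a : A, ∃ k : ℕ, algebraMap R A π ^ k * a ∈ A₀

/-- A `K`-algebra is semi-affinoid if it admits an `R`-model of ff type. -/
def IsSemiAffinoid (R : Type*) [CommRing R] (π : R) (A : Type*) [CommRing A]
    [Algebra R A] : Prop :=
  ∃ A₀ : Subalgebra R A, IsFFModel R π A₀

/-- `f` is power-bounded: `|f(x)| ≤ 1` at every maximal ideal `x`.  Since the residue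
field at a maximal ideal is a finite extension `L` of the complete discretely valued field
`K` and the valuation ring of `L` is the integral closure of `R` in `L`, this says exactly
that the residue class of `f` at every maximal ideal is integral over `R`. -/
def IsPowerBounded (R : Type*) [CommRing R] {A : Type*} [CommRing A] [Algebra R A]
    (f : A) : Prop :=
  ∀ 𝔪 : Ideal A, 𝔪.IsMaximal → IsIntegral R (Ideal.Quotient.mk 𝔪 f)

/-- `|x| < 1` for an element `x` of a (residue) `K`-algebra `L`: since the value group is
discrete, this says that `x^k/π` is integral over `R` for some `k`. -/
def AbsLtOne (R : Type*) [CommRing R] (π : R) (K : Type*) [Field K] [Algebra R K]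
    {L : Type*} [CommRing L] [Algebra R L] [Algebra K L] (x : L) : Prop :=
  ∃ k : ℕ, IsIntegral R (algebraMap K L (algebraMap R K π)⁻¹ * x ^ k)

/-- `f` is topologically quasi-nilpotent: `|f(x)| < 1` at every maximal ideal `x`. -/
def IsTopQuasiNilpotent (R : Type*) [CommRing R] (π : R) (K : Type*) [Field K]
    [Algebra R K] {A : Type*} [CommRing A] [Algebra R A] [Algebra K A] (f : A) : Prop :=
  ∀ 𝔪 : Ideal A, 𝔪.IsMaximal → AbsLtOne R π K (Ideal.Quotient.mk 𝔪 f)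

/-- The `R`-subalgebra `Å ⊆ A` of power-bounded elements. -/
noncomputable def powerBoundedSubalgebra (R : Type*) [CommRing R] (A : Type*) [CommRing A]
    [Algebra R A] : Subalgebra R A where
  carrier := {f | IsPowerBounded R f}
  add_mem' := fun {f g} hf hg 𝔪 hm => by
    simpa only [map_add] using (hf 𝔪 hm).add (hg 𝔪 hm)
  mul_mem' := fun {f g} hf hg 𝔪 hm => by
    simpa only [map_mul] using (hf 𝔪 hm).mul (hg 𝔪 hm)
  algebraMap_mem' := fun r 𝔪 hm => by
    have : (Ideal.Quotient.mk 𝔪) ((algebraMap R A) r) = algebraMap R (A ⧸ 𝔪) r := by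
      rw [IsScalarTower.algebraMap_apply R A (A ⧸ 𝔪) r]
      rfl
    rw [this]
    exact isIntegral_algebraMap

end URig

/-!
Reading off the `S^n`-coefficient, `K ⊗_R R[[S]] → K`, sends `π⁻¹ ⊗ S^n` to `π⁻¹` and
`1 ⊗ f` into `R`, so `π⁻¹ S^n ∉ R[[S]]` as `π` is not a unit. In a ring topology with the
stated basis, continuity of `x ↦ π⁻¹ x` at `0` would give `π⁻¹ (π, S)^n ⊆ R[[S]]` for some `n`.
-/

section TensorProduct

variable {R A B : Type*} [CommSemiring R] [CommSemiring A] [Algebra R A] [Semiring B]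
  [Algebra R B]

theorem Algebra.TensorProduct.algebraMap_mul_includeRight (a : A) (b : B) :
    algebraMap A (A ⊗[R] B) a * includeRight b = a ⊗ₜ b := by
  rw [algebraMap_apply, includeRight_apply, tmul_mul_tmul, mul_one, one_mul,
    Algebra.algebraMap_self_apply]

theorem Algebra.TensorProduct.mem_range_algebraMap_of_tmul_mem_range_includeRight
    {ψ : B →ₗ[R] R} {b : B} (hb : ψ b = 1) {a : A}
    (h : a ⊗ₜ[R] b ∈ Set.range (includeRight : B →ₐ[R] A ⊗[R] B)) :
    a ∈ Set.range (algebraMap R A) := by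
  obtain ⟨f, hf⟩ := h
  let φ : A ⊗[R] B →ₗ[R] A := _root_.TensorProduct.rid R A ∘ₗ LinearMap.lTensor A ψ
  have hφ : ∀ x y, φ (x ⊗ₜ y) = ψ y • x := fun _ _ => rfl
  refine ⟨ψ f, ?_⟩
  have := congrArg φ hf
  rw [includeRight_apply, hφ, hφ, hb, one_smul] at this
  rw [← this, Algebra.smul_def, mul_one]

end TensorProduct

theorem inv_algebraMap_notMem_range {R K : Type*} [CommSemiring R] [DivisionRing K]
    [Algebra R K] (hinj : Function.Injective (algebraMap R K)) {π : R} (hπ : π ≠ 0)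
    (hunit : ¬IsUnit π) : (algebraMap R K π)⁻¹ ∉ Set.range (algebraMap R K) := by
  rintro ⟨r, hr⟩
  refine hunit (IsUnit.of_mul_eq_one r (hinj ?_))
  rw [map_mul, hr, map_one, mul_inv_cancel₀ ((map_ne_zero_iff _ hinj).mpr hπ)]

theorem Filter.HasBasis.exists_mul_left_mem {A ι : Type*} [TopologicalSpace A] [MulZeroClass A]
    [ContinuousMul A] {p : ι → Prop} {s : ι → Set A} (hb : (nhds (0 : A)).HasBasis p s)
    (c : A) {i : ι} (hi : p i) : ∃ j, p j ∧ ∀ x ∈ s j, c * x ∈ s i := by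
  have hc : Tendsto (c * ·) (nhds 0) (nhds 0) := by
    simpa only [mul_zero] using (continuous_const_mul c).tendsto 0
  exact (hb.tendsto_iff hb).mp hc i hi

open scoped TensorProduct in
open URig in
theorem stmt12_general (R : Type*) [CommRing R]
    (π : R) (hπ : Irreducible π)
    (K : Type*) [Field K] [Algebra R K] [IsFractionRing R K] :
    (∀ nn : ℕ,
      algebraMap K (K ⊗[R] PowerSeries R) (algebraMap R K π)⁻¹ *
          (Algebra.TensorProduct.includeRight (R := R) (A := K) (PowerSeries.X ^ nn)) ∉
        Set.range (Algebra.TensorProduct.includeRight :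
          PowerSeries R →ₐ[R] K ⊗[R] PowerSeries R)) ∧
    ¬ ∃ t : TopologicalSpace (K ⊗[R] PowerSeries R),
        @IsTopologicalRing (K ⊗[R] PowerSeries R) t _ ∧
        @Filter.HasBasis (K ⊗[R] PowerSeries R) ℕ (@nhds _ t 0) (fun _ => True)
          (fun k =>
            (Algebra.TensorProduct.includeRight :
                PowerSeries R →ₐ[R] K ⊗[R] PowerSeries R) ''
              ((Ideal.span ({PowerSeries.C (R := R) π, PowerSeries.X} : Set (PowerSeries R)) ^ k :
                Ideal (PowerSeries R)) : Set (PowerSeries R))) := by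
  have notMem_range : ∀ n : ℕ,
      algebraMap K (K ⊗[R] PowerSeries R) (algebraMap R K π)⁻¹ *
          Algebra.TensorProduct.includeRight (PowerSeries.X ^ n) ∉
        Set.range (Algebra.TensorProduct.includeRight :
          PowerSeries R →ₐ[R] K ⊗[R] PowerSeries R) := by
    intro n h
    rw [Algebra.TensorProduct.algebraMap_mul_includeRight] at h
    exact inv_algebraMap_notMem_range (IsFractionRing.injective R K) hπ.ne_zero hπ.not_isUnit
      (Algebra.TensorProduct.mem_range_algebraMap_of_tmul_mem_range_includeRight
        (PowerSeries.coeff_X_pow_self n) h)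
  refine ⟨notMem_range, ?_⟩
  rintro ⟨t, ht, hb⟩
  obtain ⟨n, -, hn⟩ := hb.exists_mul_left_mem _ (i := 1) trivial
  have hXn : PowerSeries.X ^ n ∈ Ideal.span {PowerSeries.C π, PowerSeries.X} ^ n :=
    Ideal.pow_mem_pow (Ideal.subset_span (by simp)) n
  obtain ⟨f, -, hf⟩ := hn _ ⟨_, hXn, rfl⟩
  exact notMem_range n ⟨f, hf⟩

open scoped TensorProduct in
open URig in
/-- Consider `A = K ⊗_R R[[S]]`.  There is no ring topology on `A` for
which the subring `R[[S]]` (with its `(π,S)`-adic topology) is open: first, for no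
`n ∈ ℕ` does `π⁻¹·S^n` belong to `R[[S]]`; and consequently there is no topology on `A`
making it a topological ring and admitting the images of the powers of the ideal `(π, S)`
of `R[[S]]` as a neighborhood basis of `0`, since multiplication by `π⁻¹` would then be
continuous. -/
theorem stmt12 (R : Type*) [CommRing R] [IsDomain R] [IsDiscreteValuationRing R]
    (π : R) (hπ : Irreducible π) [IsAdicComplete (Ideal.span {π}) R]
    (K : Type*) [Field K] [Algebra R K] [IsFractionRing R K] :
    (∀ nn : ℕ,
      algebraMap K (K ⊗[R] PowerSeries R) (algebraMap R K π)⁻¹ *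
          (Algebra.TensorProduct.includeRight (R := R) (A := K) (PowerSeries.X ^ nn)) ∉
        Set.range (Algebra.TensorProduct.includeRight :
          PowerSeries R →ₐ[R] K ⊗[R] PowerSeries R)) ∧
    ¬ ∃ t : TopologicalSpace (K ⊗[R] PowerSeries R),
        @IsTopologicalRing (K ⊗[R] PowerSeries R) t _ ∧
        @Filter.HasBasis (K ⊗[R] PowerSeries R) ℕ (@nhds _ t 0) (fun _ => True)
          (fun k =>
            (Algebra.TensorProduct.includeRight :
                PowerSeries R →ₐ[R] K ⊗[R] PowerSeries R) ''
              ((Ideal.span ({PowerSeries.C (R := R) π, PowerSeries.X} : Set (PowerSeries R)) ^ k :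
                Ideal (PowerSeries R)) : Set (PowerSeries R))) :=
  stmt12_general R π hπ K
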